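/- arXiv:1407.4085 — 4 statements merged into one kernel-verified Lean document; each statement's English description precedes it below -/
import Mathlib

section
/- Let α = (α_0, α_1, ..., α_t) be a finite O-sequence, i.e., α_0 = 1, each α_j is a nonnegative integer, and α_{j+1} ≤ α_j^{⟨j⟩} for all j ≥ 1 (Macaulay growth bound). Then for every nonnegative integer j, (α_1 + j)·α_j ≥ (j + 1)·α_{j+1}. -/
/-!
Iterating the growth bound gives `α (j + 1) ≤ C(α 1 + j, j + 1)`, because the Macaulay bound of
any `a ≤ C(n, d)` is at most `C(n + 1, d + 1)`. So it suffices to show `(d + 1) a^⟨d⟩ ≤ (n + 1) a`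
whenever `a ≤ C(n, d)`. Comparing with the top term of the representation
`a = C(f d, d) + ⋯ + C(f s, s)` gives `f d ≤ n`, strictly when `s < d`. Then induct on `d`:
the top term satisfies `(d + 1) C(f d + 1, d + 1) = (f d + 1) C(f d, d)` exactly, while by Pascal's
rule the lower terms of `a^⟨d⟩` exceed those of `a` by less than `C(f d, d)`.
-/

/-- `IsMacaulayRep a d s f` says that `f s, f (s+1), ..., f d` give the `d`-th Macaulay
representation of `a`: `f d > f (d-1) > ... > f s ≥ s ≥ 1` and `a = Σ_{i=s}^{d} C(f i, i)`. -/
def IsMacaulayRep (a d s : ℕ) (f : ℕ → ℕ) : Prop :=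
  1 ≤ s ∧ s ≤ d ∧ s ≤ f s ∧ (∀ i, s ≤ i → i < d → f i < f (i + 1)) ∧
  a = ∑ i ∈ Finset.Icc s d, Nat.choose (f i) i

/-- The Macaulay growth bound `a^⟨d⟩ = Σ_{i=s}^{d} C(f i + 1, i + 1)` computed from a
Macaulay representation of `a`. -/
def macaulayBoundOf (d s : ℕ) (f : ℕ → ℕ) : ℕ :=
  ∑ i ∈ Finset.Icc s d, Nat.choose (f i + 1) (i + 1)

open Finset

theorem Nat.choose_lt_choose_add_one {n k : ℕ} (hk : 0 < k) (hkn : k ≤ n + 1) :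
    n.choose k < (n + 1).choose k := by
  obtain ⟨k, rfl⟩ := Nat.exists_eq_add_one_of_ne_zero hk.ne'
  have := Nat.choose_pos (show k ≤ n by omega)
  rw [Nat.choose_succ_succ']
  omega

theorem Nat.le_of_choose_le_choose {m n k : ℕ} (hk : 0 < k) (hkm : k ≤ m)
    (h : m.choose k ≤ n.choose k) : m ≤ n := by
  by_contra! hnm
  obtain ⟨m, rfl⟩ := Nat.exists_eq_add_one_of_ne_zero (show m ≠ 0 by omega)
  have := Nat.choose_lt_choose_add_one hk hkm
  have := Nat.choose_le_choose k (show n ≤ m by omega)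
  omega

section StrictlyIncreasing

variable {s d : ℕ} {f : ℕ → ℕ}

theorem le_apply_of_lt_apply_add_one (hsd : s ≤ d) (hfs : s ≤ f s)
    (hf : ∀ i, s ≤ i → i < d → f i < f (i + 1)) : d ≤ f d := by
  induction d, hsd using Nat.le_induction with
  | base => exact hfs
  | succ m hsm ih =>
    have := ih fun i hsi him => hf i hsi (by omega)
    have := hf m hsm (by omega)
    omega

/-- The strict increase of `f` makes the sum telescope under Pascal's rule. -/
theorem sum_choose_add_one_lt (hsd : s ≤ d) (hfs : s ≤ f s)
    (hf : ∀ i, s ≤ i → i < d → f i < f (i + 1)) :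
    ∑ i ∈ Icc s d, (f i).choose (i + 1) < (f d + 1).choose (d + 1) := by
  induction d, hsd using Nat.le_induction with
  | base =>
    rw [Icc_self, sum_singleton]
    exact Nat.choose_lt_choose_add_one (by omega) (by omega)
  | succ m hsm ih =>
    have hlow := ih fun i hsi him => hf i hsi (by omega)
    have hmono : (f m + 1).choose (m + 1) ≤ (f (m + 1)).choose (m + 1) :=
      Nat.choose_le_choose _ (hf m hsm (by omega))
    rw [sum_Icc_succ_top (by omega), Nat.choose_succ_succ' (f (m + 1))]
    omega

theorem mul_sum_choose_succ_le_mul_sum_choose (hsd : s ≤ d) (hfs : s ≤ f s)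
    (hf : ∀ i, s ≤ i → i < d → f i < f (i + 1)) {n : ℕ} (hn : f d ≤ n)
    (hlt : s < d → f d < n) :
    (d + 1) * ∑ i ∈ Icc s d, (f i + 1).choose (i + 1) ≤
      (n + 1) * ∑ i ∈ Icc s d, (f i).choose i := by
  induction d, hsd using Nat.le_induction generalizing n with
  | base =>
    rw [Icc_self, sum_singleton, sum_singleton, mul_comm, ← Nat.add_one_mul_choose_eq]
    gcongr
  | succ m hsm ih =>
    have hfm : f m < f (m + 1) := hf m hsm (by omega)
    obtain ⟨k, rfl⟩ : ∃ k, n = k + 1 := ⟨n - 1, by have := hlt (by omega); omega⟩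
    have hfk : f (m + 1) ≤ k := by have := hlt (by omega); omega
    set r := ∑ i ∈ Icc s m, (f i).choose i
    set r' := ∑ i ∈ Icc s m, (f i + 1).choose (i + 1)
    set T := (f (m + 1)).choose (m + 1)
    have hlow : (m + 1) * r' ≤ (k + 1) * r :=
      ih (fun i hsi him => hf i hsi (by omega)) (by omega) (fun _ => by omega)
    have hr' : r' ≤ r + T := by
      have hpascal : r' = r + ∑ i ∈ Icc s m, (f i).choose (i + 1) := by
        rw [← sum_add_distrib]
        exact sum_congr rfl fun i _ => Nat.choose_succ_succ' _ _
      have := sum_choose_add_one_lt hsm hfs fun i hsi him => hf i hsi (by omega)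
      have := Nat.choose_le_choose (m + 1) (show f m + 1 ≤ f (m + 1) from hfm)
      omega
    have htop : (m + 1 + 1) * (f (m + 1) + 1).choose (m + 1 + 1) = (f (m + 1) + 1) * T := by
      rw [mul_comm, Nat.add_one_mul_choose_eq]
    rw [sum_Icc_succ_top (by omega), sum_Icc_succ_top (by omega)]
    calc (m + 1 + 1) * (r' + (f (m + 1) + 1).choose (m + 1 + 1))
        = (m + 1) * r' + r' + (f (m + 1) + 1) * T := by rw [← htop]; ring
      _ ≤ (k + 1) * r + (r + T) + (k + 1) * T := by gcongr
      _ = (k + 1 + 1) * (r + T) := by ring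

end StrictlyIncreasing

namespace IsMacaulayRep

variable {a d s n : ℕ} {f : ℕ → ℕ}

theorem choose_le (h : IsMacaulayRep a d s f) : (f d).choose d ≤ a := by
  obtain ⟨-, hsd, -, -, rfl⟩ := h
  exact single_le_sum (f := fun i => (f i).choose i) (fun _ _ => Nat.zero_le _)
    (mem_Icc.mpr ⟨hsd, le_rfl⟩)

theorem choose_lt (h : IsMacaulayRep a d s f) (hsd : s < d) : (f d).choose d < a := by
  obtain ⟨-, -, hfs, -, rfl⟩ := h
  obtain ⟨d, rfl⟩ := Nat.exists_eq_add_one_of_ne_zero (show d ≠ 0 by omega)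
  rw [sum_Icc_succ_top (by omega)]
  have := single_le_sum (f := fun i => (f i).choose i) (fun _ _ => Nat.zero_le _)
    (mem_Icc.mpr ⟨le_rfl, show s ≤ d by omega⟩)
  have := Nat.choose_pos hfs
  omega

theorem top_le (h : IsMacaulayRep a d s f) (ha : a ≤ n.choose d) : f d ≤ n :=
  have ⟨hs, hsd, hfs, hf, _⟩ := h
  Nat.le_of_choose_le_choose (by omega) (le_apply_of_lt_apply_add_one hsd hfs hf)
    (h.choose_le.trans ha)

theorem top_lt (h : IsMacaulayRep a d s f) (ha : a ≤ n.choose d) (hsd : s < d) : f d < n :=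
  lt_of_not_ge fun hn => (h.choose_lt hsd).not_ge (ha.trans (Nat.choose_le_choose d hn))

theorem macaulayBoundOf_le (h : IsMacaulayRep a d s f) (ha : a ≤ n.choose d) :
    macaulayBoundOf d s f ≤ (n + 1).choose (d + 1) := by
  have htop := h.top_le ha
  have htop_lt := h.top_lt ha
  obtain ⟨-, hsd, hfs, hf, -⟩ := h
  rcases hsd.eq_or_lt with rfl | hsd
  · rw [macaulayBoundOf, Icc_self, sum_singleton]
    exact Nat.choose_le_choose _ (by omega)
  · calc macaulayBoundOf d s f ≤ (f d + 1 + 1).choose (d + 1) := le_of_lt <|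
          sum_choose_add_one_lt (f := fun i => f i + 1) hsd.le (by omega)
            fun i hsi hid => by have := hf i hsi hid; omega
      _ ≤ (n + 1).choose (d + 1) := Nat.choose_le_choose _ (by have := htop_lt hsd; omega)

theorem mul_macaulayBoundOf_le (h : IsMacaulayRep a d s f) (ha : a ≤ n.choose d) :
    (d + 1) * macaulayBoundOf d s f ≤ (n + 1) * a := by
  have htop := h.top_le ha
  have htop_lt := h.top_lt ha
  obtain ⟨-, hsd, hfs, hf, rfl⟩ := h
  exact mul_sum_choose_succ_le_mul_sum_choose hsd hfs hf htop htop_lt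

end IsMacaulayRep

def HasMacaulayGrowth (α : ℕ → ℕ) : Prop :=
  ∀ j, 1 ≤ j → (α j = 0 → α (j + 1) = 0) ∧
    (1 ≤ α j → ∃ s f, IsMacaulayRep (α j) j s f ∧ α (j + 1) ≤ macaulayBoundOf j s f)

namespace HasMacaulayGrowth

variable {α : ℕ → ℕ}

theorem succ_le_choose (hα : HasMacaulayGrowth α) {j n : ℕ} (hj : 1 ≤ j)
    (hle : α j ≤ n.choose j) : α (j + 1) ≤ (n + 1).choose (j + 1) := by
  rcases Nat.eq_zero_or_pos (α j) with hz | hpos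
  · simp [(hα j hj).1 hz]
  · obtain ⟨s, f, hrep, hb⟩ := (hα j hj).2 hpos
    exact hb.trans (hrep.macaulayBoundOf_le hle)

theorem mul_succ_le (hα : HasMacaulayGrowth α) {j n : ℕ} (hj : 1 ≤ j)
    (hle : α j ≤ n.choose j) : (j + 1) * α (j + 1) ≤ (n + 1) * α j := by
  rcases Nat.eq_zero_or_pos (α j) with hz | hpos
  · simp [(hα j hj).1 hz]
  · obtain ⟨s, f, hrep, hb⟩ := (hα j hj).2 hpos
    exact (Nat.mul_le_mul_left _ hb).trans (hrep.mul_macaulayBoundOf_le hle)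

theorem le_choose (hα : HasMacaulayGrowth α) (j : ℕ) : α (j + 1) ≤ (α 1 + j).choose (j + 1) := by
  induction j with
  | zero => simp
  | succ j ih => exact hα.succ_le_choose (by omega) ih

end HasMacaulayGrowth

theorem oseq_halfspaces (α : ℕ → ℕ) (h0 : α 0 = 1)
    (hgrowth : ∀ j, 1 ≤ j →
      (α j = 0 → α (j + 1) = 0) ∧
      (1 ≤ α j → ∃ s f, IsMacaulayRep (α j) j s f ∧ α (j + 1) ≤ macaulayBoundOf j s f)) :
    ∀ j, (j + 1) * α (j + 1) ≤ (α 1 + j) * α j := by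
  have hα : HasMacaulayGrowth α := hgrowth
  rintro (_ | j)
  · simp [h0]
  · exact hα.mul_succ_le (Nat.le_add_left 1 j) (hα.le_choose j)
end

section
/- Let d_0 < d_1 < ... < d_t be integers and let α_1, ..., α_t be rationals, with α_{t+1} := 0. Fix 1 ≤ i ≤ t. Then Σ_{j=i}^{t} [ ((d_j − d_0)·α_j − α_{j+1}) · (−1)^i / Π_{k=0, k≠i}^{j} (d_k − d_i) ] = Σ_{j=i}^{t} α_j · (−1)^{i-1} / Π_{k=1, k≠i}^{j} (d_k − d_i). -/
/-!
Put `c = d_i - d_0` and `P_j = ∏_{1 ≤ k ≤ j, k ≠ i} (d_k - d_i)`, so that the denominator on the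
left is `-c P_j`. Splitting `d_j - d_0 = (d_j - d_i) + c` turns the `j`-th summand on the left into
the `j`-th summand on the right plus `(-1)^(i-1) (Q_{j-1} - Q_j)`, where `Q_j = α_{j+1} / (c P_j)`
and `Q_{i-1}` is absent because `d_i - d_i = 0`. The sum telescopes, leaving the right-hand side
minus `(-1)^(i-1) Q_t`, and `Q_t = 0` since `α_{t+1} = 0`.
-/

open Finset

theorem prod_Icc_zero_erase {M : Type*} [CommMonoid M] (f : ℕ → M) {i : ℕ} (hi : i ≠ 0)
    (j : ℕ) : ∏ k ∈ (Icc 0 j).erase i, f k = f 0 * ∏ k ∈ (Icc 1 j).erase i, f k := by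
  rw [← insert_Icc_add_one_left_eq_Icc (Nat.zero_le j), zero_add, erase_insert_of_ne hi.symm,
    prod_insert (by simp)]

theorem prod_Icc_add_one_erase {M : Type*} [CommMonoid M] (f : ℕ → M) {a i j : ℕ}
    (ha : a ≤ j + 1) (hij : i ≤ j) :
    ∏ k ∈ (Icc a (j + 1)).erase i, f k = (∏ k ∈ (Icc a j).erase i, f k) * f (j + 1) := by
  rw [← insert_Icc_right_eq_Icc_add_one ha, erase_insert_of_ne (by omega),
    prod_insert (by simp), mul_comm]

section Field

variable {K : Type*} [Field K]

theorem sub_mul_sub_div_neg_mul (c p a b : K) (hc : c ≠ 0) :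
    (c * a - b) / (-c * p) = b / (c * p) - a / p := by
  rcases eq_or_ne p 0 with rfl | hp
  · simp
  · field_simp
    ring

theorem add_mul_sub_div_neg_mul_mul (c p y a b : K) (hc : c ≠ 0) (hy : y ≠ 0) :
    ((y + c) * a - b) / (-c * (p * y)) = b / (c * (p * y)) - a / (p * y) - a / (c * p) := by
  rcases eq_or_ne p 0 with rfl | hp
  · simp
  · field_simp
    ring

theorem sum_sub_mul_div_prod_erase (x α : ℕ → K) {i t : ℕ} (hit : i ≤ t) (h0 : x 0 ≠ x i)
    (hx : ∀ k ∈ Ioc i t, x k ≠ x i) :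
    ∑ j ∈ Icc i t, ((x j - x 0) * α j - α (j + 1)) / ∏ k ∈ (Icc 0 j).erase i, (x k - x i)
      = α (t + 1) / ((x i - x 0) * ∏ k ∈ (Icc 1 t).erase i, (x k - x i))
        - ∑ j ∈ Icc i t, α j / ∏ k ∈ (Icc 1 j).erase i, (x k - x i) := by
  have hi : i ≠ 0 := by rintro rfl; exact h0 rfl
  have hc : x i - x 0 ≠ 0 := sub_ne_zero.mpr h0.symm
  simp only [prod_Icc_zero_erase _ hi, ← neg_sub (x i) (x 0)]
  induction t, hit using Nat.le_induction with
  | base =>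
    simpa only [Icc_self, sum_singleton] using sub_mul_sub_div_neg_mul _ _ _ _ hc
  | succ t hit ih =>
    have hy : x (t + 1) - x i ≠ 0 := sub_ne_zero.mpr (hx _ (mem_Ioc.mpr ⟨by omega, le_rfl⟩))
    have step := add_mul_sub_div_neg_mul_mul _ (∏ k ∈ (Icc 1 t).erase i, (x k - x i)) _
      (α (t + 1)) (α (t + 1 + 1)) hc hy
    rw [sub_add_sub_cancel] at step
    rw [sum_Icc_succ_top (by omega), sum_Icc_succ_top (by omega),
      prod_Icc_add_one_erase _ (by omega) hit, ih fun k hk => hx k (Ioc_subset_Ioc_right t.le_succ hk), step]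
    ring

end Field

theorem extension_lemma_entry_identity (t : ℕ) (d : ℕ → ℤ)
    (hmono : ∀ k, k < t → d k < d (k + 1))
    (α : ℕ → ℚ) (htop : α (t + 1) = 0)
    (i : ℕ) (hi1 : 1 ≤ i) (hit : i ≤ t) :
    ∑ j ∈ Finset.Icc i t,
      (((d j : ℚ) - (d 0 : ℚ)) * α j - α (j + 1)) * (-1 : ℚ) ^ i
        / ∏ k ∈ (Finset.Icc 0 j).erase i, ((d k : ℚ) - (d i : ℚ))
    = ∑ j ∈ Finset.Icc i t,
        α j * (-1 : ℚ) ^ (i - 1)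
          / ∏ k ∈ (Finset.Icc 1 j).erase i, ((d k : ℚ) - (d i : ℚ)) := by
  have hd : StrictMonoOn (fun k => (d k : ℚ)) (Set.Iic t) :=
    strictMonoOn_Iic_of_lt_succ fun k hk => by exact_mod_cast hmono k hk
  have h0 : (d 0 : ℚ) ≠ d i := (hd (by simp) (by simpa) (by omega)).ne
  have hx : ∀ k ∈ Ioc i t, (d k : ℚ) ≠ d i := fun k hk => by
    rw [mem_Ioc] at hk
    exact (hd (by simpa using hit) (by simpa using hk.2) hk.1).ne'
  have key := sum_sub_mul_div_prod_erase (fun k => (d k : ℚ)) α hit h0 hx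
  rw [htop, zero_div, zero_sub] at key
  obtain ⟨m, rfl⟩ : ∃ m, i = m + 1 := ⟨i - 1, by omega⟩
  simp only [mul_div_right_comm _ ((-1 : ℚ) ^ _), ← sum_mul]
  rw [key, Nat.add_sub_cancel, pow_succ]
  ring
end

section
/- Let d ≥ 1, t ≥ 0, and let α = (α_0, ..., α_t) be a sequence of nonnegative rationals with α_j := 0 for j > t, satisfying (d + j)·α_j ≥ (j + 1)·α_{j+1} for all j ≥ 0. Then α is a nonnegative rational linear combination of the sequences h^{(j)} (0 ≤ j ≤ t), where h^{(j)}_k = C(d+k−1, k) for k ≤ j and 0 for k > j. Conversely, every nonnegative linear combination of the h^{(j)} satisfies all the inequalities (d + j)·α_j ≥ (j + 1)·α_{j+1}. -/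
/-- The truncated Hilbert-function sequence of `K[x_1,...,x_d]/m^{j+1}`. -/
def hseq (d j k : ℕ) : ℚ := if k ≤ j then (Nat.choose (d + k - 1) k : ℚ) else 0

/-!
Write `b k = C(d+k-1, k)` for the Hilbert function of `K[x_1,…,x_d]`; the generators are its
truncations `h^{(j)} = b · 1_{k ≤ j}`. Since `(d+j) b_j = (j+1) b_{j+1}`, the inequality
`(j+1) α_{j+1} ≤ (d+j) α_j` says exactly that `α_j / b_j` is non-increasing in `j`. A sequence
`α = b · g` supported on `[0, t]` is the combination of the `h^{(j)}` with coefficients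
`c_j = g_j - g_{j+1}` (the sum telescopes), and these are nonnegative precisely when `g` is
non-increasing.
-/

theorem Finset.sum_range_ite_le_sub {M : Type*} [AddCommGroup M] (f : ℕ → M) {k n : ℕ}
    (hkn : k ≤ n) :
    ∑ j ∈ Finset.range n, (if k ≤ j then f j - f (j + 1) else 0) = f k - f n := by
  have hfilter : (Finset.range n).filter (k ≤ ·) = Finset.Ico k n := by
    ext; simp [and_comm]
  rw [← Finset.sum_filter, hfilter, ← neg_sub, ← Finset.sum_Ico_sub _ hkn,
    ← Finset.sum_neg_distrib]
  simp

theorem eq_sum_sub_div_mul_truncation (b α : ℕ → ℚ) (hb : ∀ k, b k ≠ 0) {t : ℕ}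
    (hαt : ∀ k, t < k → α k = 0) (k : ℕ) :
    α k = ∑ j ∈ Finset.range (t + 1),
      (α j / b j - α (j + 1) / b (j + 1)) * (if k ≤ j then b k else 0) := by
  set g : ℕ → ℚ := fun j => α j / b j
  rcases le_or_gt k t with hkt | htk
  · have hg : g (t + 1) = 0 := by simp [g, hαt (t + 1) t.lt_succ_self]
    calc α k = (g k - g (t + 1)) * b k := by rw [hg, sub_zero, div_mul_cancel₀ _ (hb k)]
      _ = ∑ j ∈ Finset.range (t + 1), (if k ≤ j then g j - g (j + 1) else 0) * b k := by
        rw [← Finset.sum_mul, Finset.sum_range_ite_le_sub g (by omega)]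
      _ = _ := Finset.sum_congr rfl fun j _ => by split_ifs <;> simp [g]
  · rw [hαt k htk, eq_comm]
    refine Finset.sum_eq_zero fun j hj => ?_
    rw [if_neg (by rw [Finset.mem_range] at hj; omega), mul_zero]

theorem add_mul_choose_pred_eq (d j : ℕ) :
    ((d : ℚ) + j) * (d + j - 1).choose j = ((j : ℚ) + 1) * (d + (j + 1) - 1).choose (j + 1) := by
  rcases Nat.eq_zero_or_pos (d + j) with h | h
  · obtain ⟨rfl, rfl⟩ : d = 0 ∧ j = 0 := by omega
    simp
  · have key := Nat.add_one_mul_choose_eq (d + j - 1) j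
    rw [Nat.sub_add_cancel h] at key
    rw [show d + (j + 1) - 1 = d + j by omega]
    exact_mod_cast (key.trans (mul_comm _ _))

theorem choose_pred_pos {d : ℕ} (hd : 1 ≤ d) (k : ℕ) : (0 : ℚ) < (d + k - 1).choose k :=
  mod_cast Nat.choose_pos (by omega)

theorem hseq_succ_le (d i j : ℕ) :
    ((j : ℚ) + 1) * hseq d i (j + 1) ≤ ((d : ℚ) + j) * hseq d i j := by
  unfold hseq
  by_cases h : j + 1 ≤ i
  · rw [if_pos h, if_pos (by omega), add_mul_choose_pred_eq]
  · rw [if_neg h, mul_zero]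
    split_ifs <;> positivity

theorem div_choose_succ_le {d : ℕ} (hd : 1 ≤ d) {α : ℕ → ℚ} {j : ℕ}
    (hα : ((j : ℚ) + 1) * α (j + 1) ≤ ((d : ℚ) + j) * α j) :
    α (j + 1) / (d + (j + 1) - 1).choose (j + 1) ≤ α j / (d + j - 1).choose j := by
  have hj := choose_pred_pos hd j
  rw [div_le_div_iff₀ (choose_pred_pos hd (j + 1)) hj]
  refine le_of_mul_le_mul_left ?_ (by positivity : (0 : ℚ) < j + 1)
  calc ((j : ℚ) + 1) * (α (j + 1) * (d + j - 1).choose j)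
      = ((j : ℚ) + 1) * α (j + 1) * (d + j - 1).choose j := by ring
    _ ≤ ((d : ℚ) + j) * α j * (d + j - 1).choose j := by gcongr
    _ = ((j : ℚ) + 1) * (α j * (d + (j + 1) - 1).choose (j + 1)) := by
      rw [mul_right_comm, add_mul_choose_pred_eq]; ring

theorem cone_of_oseqs (d t : ℕ) (hd : 1 ≤ d) :
    (∀ α : ℕ → ℚ, (∀ j, 0 ≤ α j) → (∀ j, t < j → α j = 0) →
      (∀ j : ℕ, ((j : ℚ) + 1) * α (j + 1) ≤ ((d : ℚ) + j) * α j) →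
      ∃ c : ℕ → ℚ, (∀ j, 0 ≤ c j) ∧
        ∀ k, α k = ∑ j ∈ Finset.range (t + 1), c j * hseq d j k) ∧
    (∀ c : ℕ → ℚ, (∀ j, 0 ≤ c j) →
      ∀ j : ℕ, ((j : ℚ) + 1) * (∑ i ∈ Finset.range (t + 1), c i * hseq d i (j + 1))
        ≤ ((d : ℚ) + j) * (∑ i ∈ Finset.range (t + 1), c i * hseq d i j)) := by
  refine ⟨fun α _ hαt hα => ?_, fun c hc j => ?_⟩
  · let b : ℕ → ℚ := fun k => (d + k - 1).choose k
    exact ⟨fun j => α j / b j - α (j + 1) / b (j + 1),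
      fun j => sub_nonneg.2 (div_choose_succ_le hd (hα j)),
      eq_sum_sub_div_mul_truncation b α (fun k => (choose_pred_pos hd k).ne') hαt⟩
  · simp only [Finset.mul_sum]
    refine Finset.sum_le_sum fun i _ => ?_
    simpa only [mul_left_comm] using mul_le_mul_of_nonneg_left (hseq_succ_le d i j) (hc i)
end

section
/- Let a ≥ 1 and j ≥ 1 be integers and write the j-th Macaulay representation a = C(a_j, j) + ... + C(a_s, s) with a_j > ... > a_s ≥ s ≥ 1. If b ≤ a^{⟨j⟩} := C(a_j+1, j+1) + ... + C(a_s+1, s+1), then (a_1' + j)·a ≥ (j+1)·b where a_1' is any integer satisfying a ≤ C(a_1' + j − 1, j); in particular, taking d with a ≤ C(d+j−1, j), one has (d + j)·a ≥ (j + 1)·a^{⟨j⟩}. -/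
open Finset

namespace Nat

theorem choose_lt_choose_of_lt {m n k : ℕ} (hk : 0 < k) (hkn : k ≤ n) (hmn : m < n) :
    m.choose k < n.choose k := by
  obtain ⟨k, rfl⟩ : ∃ k', k = k' + 1 := ⟨k - 1, by omega⟩
  rcases le_or_gt k m with hkm | hmk
  · calc m.choose (k + 1) < m.choose k + m.choose (k + 1) :=
          Nat.lt_add_of_pos_left (choose_pos hkm)
      _ = (m + 1).choose (k + 1) := (choose_succ_succ' m k).symm
      _ ≤ n.choose (k + 1) := choose_le_choose _ hmn
  · rw [choose_eq_zero_of_lt (by omega)]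
    exact choose_pos hkn

theorem add_one_mul_choose_add_one_le {n k M : ℕ} (h : n + 1 ≤ M) :
    (k + 1) * (n + 1).choose (k + 1) ≤ M * n.choose k := by
  rw [mul_comm, ← add_one_mul_choose_eq]
  exact Nat.mul_le_mul_right _ h

theorem sum_Icc_choose_lt_choose_succ {s d t : ℕ} {g : ℕ → ℕ} (hst : 1 ≤ s + t)
    (hsg : s + t ≤ g s + 1) (hmono : ∀ i, s ≤ i → i < d → g i < g (i + 1))
    (hsd : s ≤ d) :
    ∑ i ∈ Icc s d, (g i).choose (i + t) < (g d + 1).choose (d + t) := by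
  induction d, hsd using Nat.le_induction with
  | base =>
    obtain ⟨u, hu⟩ : ∃ u, s + t = u + 1 := ⟨s + t - 1, by omega⟩
    rw [Icc_self, sum_singleton, hu, choose_succ_succ']
    exact Nat.lt_add_of_pos_left (choose_pos (by omega))
  | succ d hsd ih =>
    have hg : g d < g (d + 1) := hmono d hsd (lt_add_one d)
    rw [sum_Icc_succ_top (by omega), add_right_comm d 1 t, choose_succ_succ']
    exact add_lt_add_of_lt_of_le
      ((ih fun i hsi hid => hmono i hsi (by omega)).trans_le (choose_le_choose _ hg)) le_rfl

end Nat

namespace IsMacaulayRep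

variable {a d s : ℕ} {f : ℕ → ℕ}

theorem pos (h : IsMacaulayRep a d s f) : 0 < a := by
  rw [h.2.2.2.2]
  exact sum_pos' (fun i _ => Nat.zero_le _)
    ⟨s, mem_Icc.mpr ⟨le_rfl, h.2.1⟩, Nat.choose_pos h.2.2.1⟩

theorem lt_choose_succ (h : IsMacaulayRep a d s f) : a < (f d + 1).choose d := by
  obtain ⟨hs, hsd, hsf, hmono, rfl⟩ := h
  simpa using Nat.sum_Icc_choose_lt_choose_succ (t := 0) hs (by omega) hmono hsd

theorem macaulayBoundOf_lt (h : IsMacaulayRep a d s f) :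
    macaulayBoundOf d s f < a + (f d + 1).choose (d + 1) := by
  have hsplit : macaulayBoundOf d s f = a + ∑ i ∈ Icc s d, (f i).choose (i + 1) := by
    rw [h.2.2.2.2, macaulayBoundOf, ← sum_add_distrib]
    exact sum_congr rfl fun i _ => Nat.choose_succ_succ' _ _
  rw [hsplit]
  exact Nat.add_lt_add_left (Nat.sum_Icc_choose_lt_choose_succ (by omega)
    (Nat.add_le_add_right h.2.2.1 1) h.2.2.2.1 h.2.1) a

theorem of_succ (h : IsMacaulayRep a (d + 1) s f) (hsd : s ≤ d) :
    IsMacaulayRep (∑ i ∈ Icc s d, (f i).choose i) d s f :=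
  ⟨h.1, hsd, h.2.2.1, fun i hsi hid => h.2.2.2.1 i hsi (by omega), rfl⟩

theorem succ_mul_macaulayBoundOf_le (h : IsMacaulayRep a d s f) {m : ℕ}
    (ham : a ≤ m.choose d) : (d + 1) * macaulayBoundOf d s f ≤ (m + 1) * a := by
  have hsd := h.2.1
  induction d, hsd using Nat.le_induction generalizing a m with
  | base =>
    have ha : a = (f s).choose s := by rw [h.2.2.2.2, Icc_self, sum_singleton]
    have hfm : f s ≤ m := not_lt.mp fun hlt =>
      (Nat.choose_lt_choose_of_lt h.1 h.2.2.1 hlt).not_ge (ha ▸ ham)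
    rw [macaulayBoundOf, Icc_self, sum_singleton, ha]
    exact Nat.add_one_mul_choose_add_one_le (by omega)
  | succ d hsd ih =>
    set a' := ∑ i ∈ Icc s d, (f i).choose i
    set X := (f (d + 1)).choose (d + 1)
    have h' : IsMacaulayRep a' d s f := h.of_succ hsd
    have ha : a = a' + X := by rw [h.2.2.2.2, sum_Icc_succ_top (by omega)]
    have hbound : macaulayBoundOf (d + 1) s f =
        macaulayBoundOf d s f + (f (d + 1) + 1).choose (d + 1 + 1) := by
      rw [macaulayBoundOf, macaulayBoundOf, sum_Icc_succ_top (by omega)]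
    have hf : f d < f (d + 1) := h.2.2.2.1 d hsd (lt_add_one d)
    -- `a' > 0` makes `X < a ≤ C(m, d+1)`, forcing `f (d+1) < m`.
    have hfm : f (d + 1) < m :=
      (Nat.choose_mono (d + 1)).reflect_lt (by have := h'.pos; omega)
    obtain ⟨m, rfl⟩ : ∃ m', m = m' + 1 := ⟨m - 1, by omega⟩
    have ha' : a' ≤ m.choose d :=
      (h'.lt_choose_succ.trans_le (Nat.choose_le_choose d (by omega))).le
    have hb' : macaulayBoundOf d s f ≤ a' + X :=
      (h'.macaulayBoundOf_lt.trans_le (Nat.add_le_add_left (Nat.choose_le_choose _ hf) _)).le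
    have htop : (d + 1 + 1) * (f (d + 1) + 1).choose (d + 1 + 1) ≤ (m + 1) * X :=
      Nat.add_one_mul_choose_add_one_le (by omega)
    rw [hbound, ha]
    calc (d + 1 + 1) * (macaulayBoundOf d s f + (f (d + 1) + 1).choose (d + 1 + 1))
        = (d + 1) * macaulayBoundOf d s f + macaulayBoundOf d s f
          + (d + 1 + 1) * (f (d + 1) + 1).choose (d + 1 + 1) := by ring
      _ ≤ (m + 1) * a' + (a' + X) + (m + 1) * X := add_le_add (add_le_add (ih h' ha') hb') htop
      _ = (m + 1 + 1) * (a' + X) := by ring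

end IsMacaulayRep

theorem macaulay_growth_linear_bound_general (a j : ℕ)
    (s : ℕ) (f : ℕ → ℕ) (hrep : IsMacaulayRep a j s f)
    (b : ℕ) (hb : b ≤ macaulayBoundOf j s f) :
    ∀ d : ℕ, a ≤ Nat.choose (d + j - 1) j → (j + 1) * b ≤ (d + j) * a := by
  intro d hd
  have hdj : d + j - 1 + 1 = d + j := by have := hrep.1; have := hrep.2.1; omega
  calc (j + 1) * b ≤ (j + 1) * macaulayBoundOf j s f := Nat.mul_le_mul_left _ hb
    _ ≤ (d + j) * a := hdj ▸ hrep.succ_mul_macaulayBoundOf_le hd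

theorem macaulay_growth_linear_bound (a j : ℕ) (ha : 1 ≤ a) (hj : 1 ≤ j)
    (s : ℕ) (f : ℕ → ℕ) (hrep : IsMacaulayRep a j s f)
    (b : ℕ) (hb : b ≤ macaulayBoundOf j s f) :
    ∀ d : ℕ, a ≤ Nat.choose (d + j - 1) j → (j + 1) * b ≤ (d + j) * a :=
  macaulay_growth_linear_bound_general a j s f hrep b hb
end
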